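/- arXiv:1410.3439 — 8 statements merged into one kernel-verified Lean document; each statement's English description precedes it below -/
import Mathlib

section
/- Let m, n ∈ k* with k a field of characteristic ≠ 2, M = [[0,1],[m,0]], N = [[0,1],[n,0]]. If m and n lie in the same square class of k (i.e. m/n is a square in k*), then the involutions Inn(M) and Inn(N) of SL₂(k) are conjugate by an automorphism of SL₂(k) of the form Inn(A) with A ∈ GL₂(k). -/
open Matrix

noncomputable def tau {k : Type*} [Field k] (m : k) (g : Matrix (Fin 2) (Fin 2) k) :
    Matrix (Fin 2) (Fin 2) k := !![0,1;m,0] * g * (!![0,1;m,0])⁻¹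

/-! Writing `M m = !![0,1;m,0]`, the diagonal matrix `A = diag(c, 1)` satisfies
`A * M (c²n) * A⁻¹ = c • M n`. Conjugating by `A` therefore turns `Inn(M (c²n))` into
`Inn(c • M n)`, and a nonzero scalar factor does not change an inner automorphism. -/

namespace Matrix

variable {ι R : Type*} [Fintype ι] [DecidableEq ι]

theorem inv_conj_of_isUnit_det [CommRing R] {A : Matrix ι ι R} (hA : IsUnit A.det)
    (M : Matrix ι ι R) : (A * M * A⁻¹)⁻¹ = A * M⁻¹ * A⁻¹ := by
  have : Invertible A := invertibleOfIsUnitDet A hA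
  rw [mul_inv_rev, mul_inv_rev, inv_inv_of_invertible, Matrix.mul_assoc]

theorem conj_conj_inv_conj [CommRing R] {A : Matrix ι ι R} (hA : IsUnit A.det)
    (M g : Matrix ι ι R) :
    A * (M * (A⁻¹ * g * A) * M⁻¹) * A⁻¹ = (A * M * A⁻¹) * g * (A * M * A⁻¹)⁻¹ := by
  rw [inv_conj_of_isUnit_det hA]
  simp only [Matrix.mul_assoc]

theorem smul_conj_smul_inv [Field R] {c : R} (hc : c ≠ 0) {M : Matrix ι ι R}
    (hM : IsUnit M.det) (g : Matrix ι ι R) :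
    (c • M) * g * (c • M)⁻¹ = M * g * M⁻¹ := by
  have : Invertible c := invertibleOfNonzero hc
  rw [inv_smul M c hM, invOf_eq_inv, Matrix.smul_mul, Matrix.smul_mul, Matrix.mul_smul,
    smul_smul, mul_inv_cancel₀ hc, one_smul]

end Matrix

theorem diag_conj_antidiag {k : Type*} [Field k] {c : k} (hc : c ≠ 0) (n : k) :
    !![c,0;0,1] * !![0,1;c^2*n,0] * !![c,0;0,1]⁻¹ = c • !![0,1;n,0] := by
  rw [inv_eq_right_inv (B := !![c⁻¹,0;0,1]) (by simp [one_fin_two, hc])]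
  ext i j
  fin_cases i <;> fin_cases j <;> simp [field, sq]

theorem stmt3_general {k : Type*} [Field k] (m n : k) (hn : n ≠ 0)
    (hsq : ∃ c : k, c ≠ 0 ∧ m = c ^ 2 * n) :
    ∃ A : Matrix (Fin 2) (Fin 2) k, A.det ≠ 0 ∧
      ∀ g : Matrix (Fin 2) (Fin 2) k, g.det = 1 →
        A * tau m (A⁻¹ * g * A) * A⁻¹ = tau n g := by
  obtain ⟨c, hc, rfl⟩ := hsq
  have hA : (!![c,0;0,1] : Matrix (Fin 2) (Fin 2) k).det ≠ 0 := by simp [hc]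
  have hN : IsUnit (!![0,1;n,0] : Matrix (Fin 2) (Fin 2) k).det := by simp [hn]
  refine ⟨!![c,0;0,1], hA, fun g _ => ?_⟩
  rw [tau, conj_conj_inv_conj hA.isUnit, diag_conj_antidiag hc, smul_conj_smul_inv hc hN, tau]

/-- If m and n are in the same square class of k*, then Inn(M) and Inn(N) are conjugate
over k: there is A ∈ GL₂(k) with Inn(A) ∘ Inn(M) ∘ Inn(A)⁻¹ = Inn(N) on SL₂(k). -/
theorem stmt3 {k : Type*} [Field k] (hchar : (2 : k) ≠ 0) (m n : k) (hm : m ≠ 0) (hn : n ≠ 0)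
    (hsq : ∃ c : k, c ≠ 0 ∧ m = c ^ 2 * n) :
    ∃ A : Matrix (Fin 2) (Fin 2) k, A.det ≠ 0 ∧
      ∀ g : Matrix (Fin 2) (Fin 2) k, g.det = 1 →
        A * tau m (A⁻¹ * g * A) * A⁻¹ = tau n g :=
  stmt3_general m n hn hsq
end

section
/- Let k be a field of characteristic ≠ 2 and m ∈ k*, with involution τ = τ_m of SL₂(k). Then SL₂(k) = H Q̃ U, where H is the fixed-point group of τ, Q̃ = {g ∈ SL₂(k) : τ(g) = g⁻¹} is the extended symmetric space, and U = {[[1,u],[0,1]] : u ∈ k} is the upper unitriangular subgroup. That is, every g ∈ SL₂(k) can be written g = h q u with h ∈ H, q ∈ Q̃, u ∈ U. -/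
open Matrix

/-!
For `g = !![a, b; c, d]` one has `τ g = !![d, c / m; m * b, a]`, so `g ∈ SL₂(k)` lies in `Q̃`
exactly when `c = -m b`. Multiplying on the right by `!![1, u; 0, 1]` changes `b` into `b + a u`
and leaves `c` alone, so `g ∈ Q̃ U` as soon as `a ≠ 0`. If `a = 0`, then `b c = -1`, and either
`m b² = 1`, which gives `c = -m b` and `g ∈ Q̃`, or the Cayley transform `h` of
`!![0, b; m b, 0]` lies in `H` and `h⁻¹ g` has top-left entry `-2 b c / (1 - m b²) ≠ 0`.
-/

namespace SL2Involution

variable {k : Type*} [Field k] {m : k}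

lemma inv_fin_two_of_det_eq_one {g : Matrix (Fin 2) (Fin 2) k} (hg : g.det = 1) :
    g⁻¹ = !![g 1 1, -g 0 1; -g 1 0, g 0 0] := by
  rw [inv_def, hg, Ring.inverse_one, one_smul, adjugate_fin_two]

lemma tau_apply (hm : m ≠ 0) (g : Matrix (Fin 2) (Fin 2) k) :
    tau m g = !![g 1 1, g 1 0 / m; m * g 0 1, g 0 0] := by
  have hinv : (!![0, 1; m, 0] : Matrix (Fin 2) (Fin 2) k)⁻¹ = !![0, 1 / m; 1, 0] := by
    apply inv_eq_right_inv
    rw [mul_fin_two, one_fin_two]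
    simp [hm]
  rw [tau, hinv, eta_fin_two g, mul_fin_two, mul_fin_two]
  ext i j
  fin_cases i <;> fin_cases j <;> simp <;> field_simp

lemma tau_one (hm : m ≠ 0) : tau m (1 : Matrix (Fin 2) (Fin 2) k) = 1 := by
  rw [tau_apply hm, one_fin_two]
  simp

lemma tau_eq_inv_of_apply_one_zero {g : Matrix (Fin 2) (Fin 2) k} (hm : m ≠ 0)
    (hg : g.det = 1) (hc : g 1 0 = -(m * g 0 1)) : tau m g = g⁻¹ := by
  rw [tau_apply hm, inv_fin_two_of_det_eq_one hg, hc, neg_neg, neg_div, mul_div_cancel_left₀ _ hm]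

lemma exists_tau_eq_inv_mul_unipotent (hm : m ≠ 0) {g : Matrix (Fin 2) (Fin 2) k}
    (hg : g.det = 1) (h : g 0 0 ≠ 0 ∨ g 1 0 = -(m * g 0 1)) :
    ∃ q : Matrix (Fin 2) (Fin 2) k, ∃ u : k,
      (q.det = 1 ∧ tau m q = q⁻¹) ∧ g = q * !![1, u; 0, 1] := by
  obtain ⟨u, hu⟩ : ∃ u : k, g 1 0 = -(m * (g 0 1 - g 0 0 * u)) := by
    rcases h with ha | hc
    · exact ⟨(m * g 0 1 + g 1 0) / (g 0 0 * m), by field_simp; ring⟩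
    · exact ⟨0, by rw [hc]; ring⟩
  rw [det_fin_two] at hg
  have hq : (!![g 0 0, g 0 1 - g 0 0 * u; g 1 0, g 1 1 - g 1 0 * u]).det = 1 := by
    rw [det_fin_two_of]
    linear_combination hg
  refine ⟨_, u, ⟨hq, tau_eq_inv_of_apply_one_zero hm hq (by simpa using hu)⟩, ?_⟩
  rw [mul_fin_two, eta_fin_two g]
  simp

/-- The Cayley transform `(1 + X)(1 - X)⁻¹` of `X = !![0, t; m t, 0]`. -/
noncomputable def cayley (m t : k) : Matrix (Fin 2) (Fin 2) k :=
  !![(1 + m * t ^ 2) / (1 - m * t ^ 2), 2 * t / (1 - m * t ^ 2);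
    m * (2 * t / (1 - m * t ^ 2)), (1 + m * t ^ 2) / (1 - m * t ^ 2)]

lemma tau_cayley (hm : m ≠ 0) (t : k) : tau m (cayley m t) = cayley m t := by
  rw [tau_apply hm, cayley]
  simp [hm]

lemma det_cayley {t : k} (ht : 1 - m * t ^ 2 ≠ 0) : (cayley m t).det = 1 := by
  rw [cayley, det_fin_two_of]
  field_simp
  ring

lemma cayley_mul_cayley_neg {t : k} (ht : 1 - m * t ^ 2 ≠ 0) :
    cayley m t * cayley m (-t) = 1 := by
  rw [cayley, cayley, mul_fin_two, one_fin_two, neg_sq]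
  ext i j
  fin_cases i <;> fin_cases j <;> simp <;> field_simp <;> ring

lemma cayley_neg_mul_apply_zero_zero {g : Matrix (Fin 2) (Fin 2) k} (hg : g.det = 1)
    (ha : g 0 0 = 0) (ht : 1 - m * g 0 1 ^ 2 ≠ 0) :
    (cayley m (-g 0 1) * g) 0 0 = 2 / (1 - m * g 0 1 ^ 2) := by
  rw [det_fin_two, ha] at hg
  rw [cayley, eta_fin_two g, mul_fin_two, neg_sq]
  simp only [of_apply, cons_val', cons_val_zero, cons_val_one, empty_val', cons_val_fin_one, ha]
  field_simp
  linear_combination 2 * hg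

end SL2Involution

open SL2Involution in
/-- SL₂(k) = H Q̃ U : every g ∈ SL₂(k) factors as g = h q u with h ∈ H, q ∈ Q̃,
u upper unitriangular. -/
theorem stmt6 {k : Type*} [Field k] (hchar : (2 : k) ≠ 0) (m : k) (hm : m ≠ 0) :
    ∀ g : Matrix (Fin 2) (Fin 2) k, g.det = 1 →
      ∃ h q : Matrix (Fin 2) (Fin 2) k, ∃ u : k,
        (h.det = 1 ∧ tau m h = h) ∧ (q.det = 1 ∧ tau m q = q⁻¹) ∧
        g = h * q * !![1, u; 0, 1] := by
  intro g hg
  by_cases hgen : g 0 0 = 0 ∧ 1 - m * g 0 1 ^ 2 ≠ 0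
  · obtain ⟨ha, ht⟩ := hgen
    have hdet : (cayley m (-g 0 1) * g).det = 1 := by
      rw [det_mul, det_cayley (by rwa [neg_sq]), hg, one_mul]
    have ha' : (cayley m (-g 0 1) * g) 0 0 ≠ 0 := by
      rw [cayley_neg_mul_apply_zero_zero hg ha ht]
      exact div_ne_zero hchar ht
    obtain ⟨q, u, hq, hgu⟩ := exists_tau_eq_inv_mul_unipotent hm hdet (Or.inl ha')
    refine ⟨cayley m (g 0 1), q, u, ⟨det_cayley ht, tau_cayley hm _⟩, hq, ?_⟩
    rw [mul_assoc, ← hgu, ← mul_assoc, cayley_mul_cayley_neg ht, one_mul]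
  · have hQ : g 0 0 ≠ 0 ∨ g 1 0 = -(m * g 0 1) := by
      by_cases ha : g 0 0 = 0
      · have hmb : 1 - m * g 0 1 ^ 2 = 0 := by tauto
        rw [det_fin_two, ha] at hg
        exact Or.inr (by linear_combination g 1 0 * hmb - m * g 0 1 * hg)
      · exact Or.inl ha
    obtain ⟨q, u, hq, hgu⟩ := exists_tau_eq_inv_mul_unipotent hm hg hQ
    exact ⟨1, q, u, ⟨det_one, tau_one hm⟩, hq, by rwa [one_mul]⟩
end

section
/- Let τ = τ₁ be conjugation by [[0,1],[1,0]] on SL₂(ℝ). The element g = [[1, 2(√5−3)⁻¹],[(√5−3)/2, 2]] lies in SL₂(ℝ) but not in H Q̃, where H is the fixed-point group of τ and Q̃ its extended symmetric space. In particular SL₂(ℝ) ≠ H Q̃. -/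
/-!
Write `τ = τ₁`. Elements of `H` have the form `[[a, b], [b, a]]` with `a² - b² = 1`, and elements of
`Q̃` satisfy `q₁₀ = -q₀₁`. Hence for `g = h q` the sums `tr g` and `g₀₁ + g₁₀` are `a tr q` and
`b tr q`, so `tr² g - (g₀₁ + g₁₀)² = (tr q)²`, which vanishes only when `tr g` does. The given
matrix has trace `3` and `g₀₁ + g₁₀ = -3`.
-/
open Matrix

section

variable {k : Type*} [Field k]

lemma tau_eq_of_ne_zero {m : k} (hm : m ≠ 0) (g : Matrix (Fin 2) (Fin 2) k) :
    tau m g = !![g 1 1, g 1 0 / m; m * g 0 1, g 0 0] := by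
  have hinv : (!![0, 1; m, 0])⁻¹ = !![0, m⁻¹; 1, 0] := by
    apply inv_eq_right_inv
    rw [one_fin_two]
    simp [hm]
  rw [tau, hinv, eta_fin_two g]
  simp [div_eq_mul_inv, mul_right_comm _ _ m⁻¹, hm]

lemma entries_of_tau_one_eq_self {h : Matrix (Fin 2) (Fin 2) k} (hτ : tau 1 h = h) :
    h 1 1 = h 0 0 ∧ h 1 0 = h 0 1 := by
  rw [tau_eq_of_ne_zero one_ne_zero] at hτ
  exact ⟨congrFun (congrFun hτ 0) 0, by simpa using (congrFun (congrFun hτ 1) 0).symm⟩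

lemma entry_of_tau_one_eq_inv {q : Matrix (Fin 2) (Fin 2) k} (hdet : q.det = 1)
    (hτ : tau 1 q = q⁻¹) : q 1 0 = -q 0 1 := by
  rw [tau_eq_of_ne_zero one_ne_zero, inv_def, hdet, adjugate_fin_two] at hτ
  simpa using congrFun (congrFun hτ 0) 1

lemma trace_mul_eq_and_antidiag_sum_eq {h q : Matrix (Fin 2) (Fin 2) k}
    (h11 : h 1 1 = h 0 0) (h10 : h 1 0 = h 0 1) (q10 : q 1 0 = -q 0 1) :
    trace (h * q) = h 0 0 * trace q ∧ (h * q) 0 1 + (h * q) 1 0 = h 0 1 * trace q := by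
  simp only [trace_fin_two, mul_apply, Fin.sum_univ_two, h11, h10, q10]
  constructor <;> ring

theorem trace_eq_zero_of_tau_fixed_mul_tau_inv {h q : Matrix (Fin 2) (Fin 2) k}
    (hdet : h.det = 1) (hτ : tau 1 h = h) (qdet : q.det = 1) (qτ : tau 1 q = q⁻¹)
    (hsq : trace (h * q) ^ 2 = ((h * q) 0 1 + (h * q) 1 0) ^ 2) : trace (h * q) = 0 := by
  obtain ⟨h11, h10⟩ := entries_of_tau_one_eq_self hτ
  obtain ⟨htr, hanti⟩ :=
    trace_mul_eq_and_antidiag_sum_eq h11 h10 (entry_of_tau_one_eq_inv qdet qτ)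
  rw [det_fin_two, h11, h10] at hdet
  rw [htr, hanti] at hsq
  have hq : trace q ^ 2 = 0 := by linear_combination -(trace q ^ 2) * hdet + hsq
  rw [htr, pow_eq_zero_iff two_ne_zero |>.mp hq, mul_zero]

end

/-- For τ = τ₁ on SL₂(ℝ), the element g = [[1, 2(√5-3)⁻¹],[(√5-3)/2, 2]] lies in SL₂(ℝ)
but not in H Q̃; in particular SL₂(ℝ) ≠ H Q̃. -/
theorem stmt7 :
    (!![(1 : ℝ), 2 * (Real.sqrt 5 - 3)⁻¹; (Real.sqrt 5 - 3) / 2, 2]).det = 1 ∧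
    ¬ ∃ h q : Matrix (Fin 2) (Fin 2) ℝ,
        (h.det = 1 ∧ tau 1 h = h) ∧ (q.det = 1 ∧ tau 1 q = q⁻¹) ∧
        !![(1 : ℝ), 2 * (Real.sqrt 5 - 3)⁻¹; (Real.sqrt 5 - 3) / 2, 2] = h * q := by
  have hsqrt : Real.sqrt 5 ^ 2 = 5 := Real.sq_sqrt (by norm_num)
  have hne : Real.sqrt 5 - 3 ≠ 0 := by nlinarith [Real.sqrt_nonneg 5]
  have hinv : 2 * (Real.sqrt 5 - 3)⁻¹ = -(Real.sqrt 5 + 3) / 2 := by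
    field_simp
    linear_combination hsqrt
  refine ⟨?_, ?_⟩
  · rw [det_fin_two_of]
    field_simp
    ring
  · rintro ⟨h, q, ⟨hdet, hτ⟩, ⟨qdet, qτ⟩, hg⟩
    have htr : trace (h * q) = 3 := by
      rw [← hg, trace_fin_two_of]
      norm_num
    have hanti : (h * q) 0 1 + (h * q) 1 0 = -3 := by
      rw [← hg]
      simp only [of_apply, cons_val', cons_val_zero, cons_val_one, cons_val_fin_one, hinv]
      ring
    refine three_ne_zero (htr.symm.trans ?_)
    exact trace_eq_zero_of_tau_fixed_mul_tau_inv hdet hτ qdet qτ (by rw [htr, hanti]; norm_num)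
end

section
/- Let τ = τ₁ be conjugation by [[0,1],[1,0]] on SL₂(ℝ). Then the extended symmetric space equals the symmetric space: {g ∈ SL₂(ℝ) : τ(g) = g⁻¹} = {g τ(g)⁻¹ : g ∈ SL₂(ℝ)}. -/
/-!
If `τ q = q⁻¹`, then for every matrix `h` the matrix `g = h + q τ(h)` satisfies `g = q τ(g)`,
hence `q = g τ(g)⁻¹` as soon as `g` is invertible; rescaling `g` by `(det g)^(-1/2)` keeps this
and makes `det g = 1` when `det g > 0`. Taking `h = 1` gives `det g = 2 + tr q`, taking
`h = [[0,1],[-m,0]]`, which `τ` negates, gives `det g = m (2 - tr q)`, and for `m > 0` one of the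
two is positive. The reverse inclusion only uses that `τ` is an involutive automorphism.
-/

open Matrix

namespace Matrix

variable {R : Type*} [CommRing R]

lemma det_one_add_fin_two (q : Matrix (Fin 2) (Fin 2) R) : (1 + q).det = 1 + q.trace + q.det := by
  simp only [det_fin_two, trace_fin_two, Matrix.add_apply, one_apply_eq, one_apply_ne zero_ne_one,
    one_apply_ne one_ne_zero]
  ring

lemma det_one_sub_fin_two (q : Matrix (Fin 2) (Fin 2) R) : (1 - q).det = 1 - q.trace + q.det := by
  simp only [det_fin_two, trace_fin_two, Matrix.sub_apply, one_apply_eq, one_apply_ne zero_ne_one,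
    one_apply_ne one_ne_zero]
  ring

end Matrix

section Field

variable {k : Type*} [Field k] {m : k}

lemma isUnit_det_swap (hm : m ≠ 0) : IsUnit (!![0,1;m,0] : Matrix (Fin 2) (Fin 2) k).det := by
  simpa [det_fin_two_of] using hm

lemma tau_add (g h : Matrix (Fin 2) (Fin 2) k) : tau m (g + h) = tau m g + tau m h := by
  simp only [tau, Matrix.mul_add, Matrix.add_mul]

lemma tau_smul (c : k) (g : Matrix (Fin 2) (Fin 2) k) : tau m (c • g) = c • tau m g := by
  simp only [tau, Matrix.mul_smul, Matrix.smul_mul]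

lemma tau_mul (hm : m ≠ 0) (g h : Matrix (Fin 2) (Fin 2) k) :
    tau m (g * h) = tau m g * tau m h := by
  simp only [tau, Matrix.mul_assoc, nonsing_inv_mul_cancel_left _ _ (isUnit_det_swap hm)]

lemma tau_one (hm : m ≠ 0) : tau m 1 = 1 := by
  simp [tau, mul_nonsing_inv _ (isUnit_det_swap hm)]

lemma tau_inv (hm : m ≠ 0) (g : Matrix (Fin 2) (Fin 2) k) : tau m g⁻¹ = (tau m g)⁻¹ := by
  simp only [tau, Matrix.mul_inv_rev, nonsing_inv_nonsing_inv _ (isUnit_det_swap hm),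
    Matrix.mul_assoc]

lemma det_tau (hm : m ≠ 0) (g : Matrix (Fin 2) (Fin 2) k) : (tau m g).det = g.det :=
  det_conj ((isUnit_iff_isUnit_det _).2 (isUnit_det_swap hm)) g

lemma tau_tau (hm : m ≠ 0) (g : Matrix (Fin 2) (Fin 2) k) : tau m (tau m g) = g := by
  have hsq : (!![0,1;m,0] : Matrix (Fin 2) (Fin 2) k) * !![0,1;m,0] = m • 1 := by
    ext i j; fin_cases i <;> fin_cases j <;> simp
  have hinv : (m • (1 : Matrix (Fin 2) (Fin 2) k))⁻¹ = m⁻¹ • 1 :=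
    inv_eq_left_inv (by simp [smul_smul, hm])
  simp only [tau, ← Matrix.mul_assoc, hsq]
  simp only [Matrix.mul_assoc, ← Matrix.mul_inv_rev, hsq, hinv]
  simp [smul_smul, hm]

lemma tau_antidiag (hm : m ≠ 0) : tau m !![0,1;-m,0] = -!![0,1;-m,0] := by
  have hanti : (!![0,1;m,0] : Matrix (Fin 2) (Fin 2) k) * !![0,1;-m,0] =
      -!![0,1;-m,0] * !![0,1;m,0] := by
    ext i j; fin_cases i <;> fin_cases j <;> simp
  rw [tau, hanti, mul_nonsing_inv_cancel_right _ _ (isUnit_det_swap hm)]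

lemma tau_mul_inv_tau (hm : m ≠ 0) {g : Matrix (Fin 2) (Fin 2) k} (hg : IsUnit g.det) :
    tau m (g * (tau m g)⁻¹) = (g * (tau m g)⁻¹)⁻¹ := by
  rw [tau_mul hm, tau_inv hm, tau_tau hm, Matrix.mul_inv_rev,
    nonsing_inv_nonsing_inv _ (by rwa [det_tau hm])]

lemma det_mul_inv_tau (hm : m ≠ 0) {g : Matrix (Fin 2) (Fin 2) k} (hg : IsUnit g.det) :
    (g * (tau m g)⁻¹).det = 1 := by
  rw [det_mul, det_nonsing_inv, det_tau hm, Ring.inverse_eq_inv', mul_inv_cancel₀ hg.ne_zero]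

lemma mul_inv_tau_of_eq_mul_tau {g q : Matrix (Fin 2) (Fin 2) k} (hg : IsUnit (tau m g).det)
    (h : g = q * tau m g) : g * (tau m g)⁻¹ = q := by
  nth_rw 1 [h]
  exact mul_nonsing_inv_cancel_right _ _ hg

lemma add_mul_tau_eq_mul_tau (hm : m ≠ 0) {q : Matrix (Fin 2) (Fin 2) k} (hq : IsUnit q.det)
    (hτ : tau m q = q⁻¹) (h : Matrix (Fin 2) (Fin 2) k) :
    h + q * tau m h = q * tau m (h + q * tau m h) := by
  rw [tau_add, tau_mul hm, tau_tau hm, hτ, Matrix.mul_add, ← Matrix.mul_assoc,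
    mul_nonsing_inv _ hq, Matrix.one_mul, add_comm]

end Field

section Real

variable {m : ℝ}

lemma exists_det_pos_eq_mul_tau (hm : 0 < m) {q : Matrix (Fin 2) (Fin 2) ℝ}
    (hq : q.det = 1) (hτ : tau m q = q⁻¹) : ∃ g, 0 < g.det ∧ g = q * tau m g := by
  have hq' : IsUnit q.det := by simp [hq]
  by_cases htr : -2 < q.trace
  · refine ⟨1 + q * tau m 1, ?_, add_mul_tau_eq_mul_tau hm.ne' hq' hτ 1⟩
    rw [tau_one hm.ne', Matrix.mul_one, det_one_add_fin_two, hq]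
    linarith
  · set X : Matrix (Fin 2) (Fin 2) ℝ := !![0,1;-m,0]
    refine ⟨X + q * tau m X, ?_, add_mul_tau_eq_mul_tau hm.ne' hq' hτ X⟩
    rw [tau_antidiag hm.ne', Matrix.mul_neg, ← sub_eq_add_neg, ← one_sub_mul, det_mul,
      det_one_sub_fin_two, hq, det_fin_two_of]
    nlinarith

lemma exists_det_eq_one_eq_mul_tau {g q : Matrix (Fin 2) (Fin 2) ℝ} (hg : 0 < g.det)
    (h : g = q * tau m g) : ∃ g', g'.det = 1 ∧ g' = q * tau m g' := by
  refine ⟨(√g.det)⁻¹ • g, ?_, ?_⟩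
  · rw [det_smul, Fintype.card_fin, inv_pow, Real.sq_sqrt hg.le, inv_mul_cancel₀ hg.ne']
  · rw [tau_smul, Matrix.mul_smul, ← h]

theorem extendedSymmetricSpace_eq_symmetricSpace (hm : 0 < m) :
    {g : Matrix (Fin 2) (Fin 2) ℝ | g.det = 1 ∧ tau m g = g⁻¹} =
      {q | ∃ g : Matrix (Fin 2) (Fin 2) ℝ, g.det = 1 ∧ q = g * (tau m g)⁻¹} := by
  ext q
  constructor
  · rintro ⟨hq, hτ⟩
    obtain ⟨g, hpos, hg⟩ := exists_det_pos_eq_mul_tau hm hq hτ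
    obtain ⟨g, hdet, hg⟩ := exists_det_eq_one_eq_mul_tau hpos hg
    exact ⟨g, hdet, (mul_inv_tau_of_eq_mul_tau (by simp [det_tau hm.ne', hdet]) hg).symm⟩
  · rintro ⟨g, hdet, rfl⟩
    have hg : IsUnit g.det := by simp [hdet]
    exact ⟨det_mul_inv_tau hm.ne' hg, tau_mul_inv_tau hm.ne' hg⟩

end Real

/-- For τ = τ₁ on SL₂(ℝ), the extended symmetric space equals the symmetric space. -/
theorem stmt8 :
    {g : Matrix (Fin 2) (Fin 2) ℝ | g.det = 1 ∧ tau 1 g = g⁻¹} =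
      {q : Matrix (Fin 2) (Fin 2) ℝ |
        ∃ g : Matrix (Fin 2) (Fin 2) ℝ, g.det = 1 ∧ q = g * (tau 1 g)⁻¹} :=
  extendedSymmetricSpace_eq_symmetricSpace one_pos
end

section
/- Let k be an algebraically closed field of characteristic ≠ 2 and τ = τ₁ conjugation by [[0,1],[1,0]] on SL₂(k). Then {g ∈ SL₂(k) : τ(g) = g⁻¹} = {g τ(g)⁻¹ : g ∈ SL₂(k)}. -/
open Matrix

/-! For `g = !![p, q; r, s]` put `u = p + q`, `v = p - q`, `w = s + r`, `z = s - r`, coordinates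
adapted to the eigenvectors `(1, 1)`, `(1, -1)` of `!![0, 1; 1, 0]`. Then `det g = (uz + vw) / 2`
and `g τ₁(g)⁻¹ = !![uv, (uz - vw) / 2; -(uz - vw) / 2, wz]`. The solutions of `τ₁(g) = g⁻¹`,
`det g = 1` are the matrices `!![a, b; -b, d]` with `ad + b² = 1`, and such a matrix is
`g τ₁(g)⁻¹` with `det g = 1` as soon as the singular matrix `!![a, 1 + b; 1 - b, d]` factors as
`(u, w)ᵀ (v, z)`, which every singular `2 × 2` matrix does. -/
namespace Matrix

variable {K : Type*} [Field K]

theorem exists_eq_vecMulVec_of_det_eq_zero {N : Matrix (Fin 2) (Fin 2) K} (h : N.det = 0) :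
    ∃ x y : Fin 2 → K, N = vecMulVec x y := by
  obtain ⟨a, b, c, d, rfl⟩ : ∃ a b c d, N = !![a, b; c, d] := ⟨_, _, _, _, eta_fin_two N⟩
  rw [det_fin_two_of, sub_eq_zero] at h
  have entrywise : ∀ {x y : Fin 2 → K}, x 0 * y 0 = a → x 0 * y 1 = b → x 1 * y 0 = c →
      x 1 * y 1 = d → !![a, b; c, d] = vecMulVec x y := by
    intro x y h₀₀ h₀₁ h₁₀ h₁₁
    ext i j
    fin_cases i <;> fin_cases j <;> simp [vecMulVec_apply, *]
  by_cases ha : a = 0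
  · by_cases hb : b = 0
    · exact ⟨![0, 1], ![c, d], entrywise (by simp [ha]) (by simp [hb]) (by simp) (by simp)⟩
    · have hc : c = 0 := by simpa [ha, hb] using h.symm
      refine ⟨![1, d / b], ![0, b], entrywise (by simp [ha]) (by simp) (by simp [hc]) ?_⟩
      simp [hb]
  · refine ⟨![1, c / a], ![a, b], entrywise (by simp) (by simp) (by simp [ha]) ?_⟩
    simp only [cons_val_zero, cons_val_one]
    rw [div_mul_eq_mul_div, div_eq_iff ha]
    linear_combination -h

end Matrix

section

variable {K : Type*} [Field K]

theorem inv_fin_two_of_det_eq_one {a b c d : K} (h : a * d - b * c = 1) :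
    (!![a, b; c, d])⁻¹ = !![d, -b; -c, a] := by
  rw [inv_def, det_fin_two_of, h, Ring.inverse_one, one_smul, adjugate_fin_two_of]

theorem tau_one_of (a b c d : K) : tau 1 !![a, b; c, d] = !![d, c; b, a] := by
  have hM : (!![0, (1 : K); 1, 0])⁻¹ = !![0, 1; 1, 0] :=
    inv_eq_left_inv (by simp [one_fin_two])
  simp [tau, hM]

theorem tau_one_eq_inv_iff {a b c d : K} (h : a * d - b * c = 1) :
    tau 1 !![a, b; c, d] = (!![a, b; c, d])⁻¹ ↔ c = -b := by
  rw [tau_one_of, inv_fin_two_of_det_eq_one h]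
  constructor
  · intro hτ
    simpa using congrFun₂ hτ 0 1
  · rintro rfl
    simp

theorem mul_inv_tau_one_of {p q r s : K} (h : p * s - q * r = 1) :
    !![p, q; r, s] * (tau 1 !![p, q; r, s])⁻¹ =
      !![p * p - q * q, q * s - p * r; -(q * s - p * r), s * s - r * r] := by
  rw [tau_one_of, inv_fin_two_of_det_eq_one (by linear_combination h), mul_fin_two]
  ring_nf

theorem exists_mul_inv_tau_one_eq (h2 : (2 : K) ≠ 0) {a b d : K} (h : a * d + b * b = 1) :
    ∃ g : Matrix (Fin 2) (Fin 2) K, g.det = 1 ∧ !![a, b; -b, d] = g * (tau 1 g)⁻¹ := by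
  obtain ⟨x, y, hxy⟩ := exists_eq_vecMulVec_of_det_eq_zero
    (N := !![a, 1 + b; 1 - b, d]) (by rw [det_fin_two_of]; linear_combination h)
  have entry (i j : Fin 2) := congrFun₂ hxy i j
  simp only [vecMulVec_apply] at entry
  have ha : a = x 0 * y 0 := by simpa using entry 0 0
  have hb₁ : 1 + b = x 0 * y 1 := by simpa using entry 0 1
  have hb₂ : 1 - b = x 1 * y 0 := by simpa using entry 1 0
  have hd : d = x 1 * y 1 := by simpa using entry 1 1
  set p := (x 0 + y 0) / 2 with hp
  set q := (x 0 - y 0) / 2 with hq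
  set r := (x 1 - y 1) / 2 with hr
  set s := (x 1 + y 1) / 2 with hs
  have hdet : p * s - q * r = 1 := by
    rw [hp, hq, hr, hs]
    field_simp
    linear_combination -2 * (hb₁ + hb₂)
  have hpq : p * p - q * q = a := by
    rw [hp, hq, ha]
    field_simp
    ring
  have hqs : q * s - p * r = b := by
    rw [hp, hq, hr, hs]
    field_simp
    linear_combination -2 * (hb₁ - hb₂)
  have hrs : s * s - r * r = d := by
    rw [hr, hs, hd]
    field_simp
    ring
  refine ⟨!![p, q; r, s], by rw [det_fin_two_of, hdet], ?_⟩
  rw [mul_inv_tau_one_of hdet, hpq, hqs, hrs]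

end

theorem stmt9_general {k : Type*} [Field k] (hchar : (2 : k) ≠ 0) :
    {g : Matrix (Fin 2) (Fin 2) k | g.det = 1 ∧ tau 1 g = g⁻¹} =
      {q : Matrix (Fin 2) (Fin 2) k |
        ∃ g : Matrix (Fin 2) (Fin 2) k, g.det = 1 ∧ q = g * (tau 1 g)⁻¹} := by
  ext g
  constructor
  · rintro ⟨hdet, hτ⟩
    obtain ⟨a, b, c, d, rfl⟩ : ∃ a b c d, g = !![a, b; c, d] := ⟨_, _, _, _, eta_fin_two g⟩
    rw [det_fin_two_of] at hdet
    obtain rfl := (tau_one_eq_inv_iff hdet).1 hτ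
    exact exists_mul_inv_tau_one_eq hchar (by linear_combination hdet)
  · rintro ⟨h, hdet, rfl⟩
    obtain ⟨p, q, r, s, rfl⟩ : ∃ p q r s, h = !![p, q; r, s] := ⟨_, _, _, _, eta_fin_two h⟩
    rw [det_fin_two_of] at hdet
    have hsym : (p * p - q * q) * (s * s - r * r) + (q * s - p * r) * (q * s - p * r) = 1 := by
      linear_combination (p * s - q * r + 1) * hdet
    rw [Set.mem_ofPred_eq, mul_inv_tau_one_of hdet, det_fin_two_of,
      tau_one_eq_inv_iff (by linear_combination hsym)]
    exact ⟨by linear_combination hsym, rfl⟩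

/-- For k algebraically closed of characteristic ≠ 2 and τ = τ₁ on SL₂(k),
the extended symmetric space equals the symmetric space. -/
theorem stmt9 {k : Type*} [Field k] [IsAlgClosed k] (hchar : (2 : k) ≠ 0) :
    {g : Matrix (Fin 2) (Fin 2) k | g.det = 1 ∧ tau 1 g = g⁻¹} =
      {q : Matrix (Fin 2) (Fin 2) k |
        ∃ g : Matrix (Fin 2) (Fin 2) k, g.det = 1 ∧ q = g * (tau 1 g)⁻¹} :=
  stmt9_general hchar
end

section
/- Let k be a field of characteristic ≠ 2 and m ∈ k* with m not a square in k. Then every element of the extended symmetric space Q̃ = {g ∈ SL₂(k) : τ_m(g) = g⁻¹} is semisimple (diagonalizable over the algebraic closure); more precisely, every q ∈ Q̃ with q ≠ ±I has two distinct eigenvalues. -/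
/-
Write q = [[a, b], [c, d]]. For q ∈ SL₂(k), comparing the (0,0) entries of
[[0,1],[m,0]] q = q⁻¹ [[0,1],[m,0]] gives c = -m b. If tr q = 2ε with ε = ±1, then
(a - ε)² = a² - a(a + d) + ad - bc = -bc = m b². As m is not a square this forces b = 0, hence
a = d = ε and c = 0, i.e. q = ±I.
-/

open Matrix

namespace Matrix

theorem sq_apply_zero_zero_sub_eq_of_trace_eq {R : Type*} [CommRing R] {ε : R} (hε : ε ^ 2 = 1)
    {q : Matrix (Fin 2) (Fin 2) R} (hdet : q.det = 1) (htr : q.trace = 2 * ε) :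
    (q 0 0 - ε) ^ 2 = -(q 0 1 * q 1 0) := by
  rw [det_fin_two] at hdet
  rw [trace_fin_two] at htr
  linear_combination q 0 0 * htr - hdet + hε

end Matrix

section Tau

variable {k : Type*} [Field k] {m : k}

theorem apply_one_zero_eq_of_tau_eq_inv (hm : m ≠ 0) {q : Matrix (Fin 2) (Fin 2) k}
    (hdet : q.det = 1) (h : tau m q = q⁻¹) : q 1 0 = -m * q 0 1 := by
  have hJ : IsUnit (!![(0 : k), 1; m, 0]).det := by simp [det_fin_two_of, hm]
  have hcomm : !![(0 : k), 1; m, 0] * q = q⁻¹ * !![(0 : k), 1; m, 0] := by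
    rw [← h, tau, Matrix.mul_assoc _ _⁻¹, nonsing_inv_mul _ hJ, Matrix.mul_one]
  have h00 := congr_fun₂ hcomm 0 0
  rw [inv_def, hdet, adjugate_fin_two] at h00
  simp only [mul_apply, of_apply, cons_val', cons_val_fin_one, cons_val_zero, cons_val_one,
    Fin.sum_univ_two, zero_mul, one_mul, zero_add, Ring.inverse_one, one_smul, mul_zero,
    neg_mul] at h00
  linear_combination h00

theorem eq_scalar_of_tau_eq_inv_of_trace_eq (hm : m ≠ 0) (hns : ∀ x : k, x ^ 2 ≠ m) {ε : k}
    (hε : ε ^ 2 = 1) {q : Matrix (Fin 2) (Fin 2) k} (hdet : q.det = 1) (h : tau m q = q⁻¹)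
    (htr : q.trace = 2 * ε) : q = scalar (Fin 2) ε := by
  have hc := apply_one_zero_eq_of_tau_eq_inv hm hdet h
  have hsq : (q 0 0 - ε) ^ 2 = m * q 0 1 ^ 2 := by
    rw [sq_apply_zero_zero_sub_eq_of_trace_eq hε hdet htr, hc]
    ring
  have hb : q 0 1 = 0 := by
    by_contra hb
    apply hns ((q 0 0 - ε) / q 0 1)
    rw [div_pow, hsq]
    field_simp
  have ha : q 0 0 = ε := by
    rw [hb] at hsq
    simpa [sub_eq_zero] using hsq
  have hd : q 1 1 = ε := by
    rw [trace_fin_two, ha] at htr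
    linear_combination htr
  ext i j
  fin_cases i <;> fin_cases j <;> simp [ha, hb, hc, hd]

end Tau

theorem stmt11_general {k : Type*} [Field k] (m : k) (hm : m ≠ 0)
    (hns : ∀ x : k, x ^ 2 ≠ m) :
    ∀ q : Matrix (Fin 2) (Fin 2) k, q.det = 1 → tau m q = q⁻¹ →
      q ≠ 1 → q ≠ -1 → q.trace ≠ 2 ∧ q.trace ≠ -2 := by
  intro q hdet h hq1 hqm1
  constructor
  · intro htr
    apply hq1
    rw [eq_scalar_of_tau_eq_inv_of_trace_eq hm hns (one_pow 2) hdet h (by rw [htr, mul_one]),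
      map_one]
  · intro htr
    apply hqm1
    rw [eq_scalar_of_tau_eq_inv_of_trace_eq hm hns neg_one_sq hdet h (by rw [htr, mul_neg_one]),
      map_neg, map_one]

/-- If m is not a square in k, every element of the extended symmetric space of τ_m other
than ±I has two distinct eigenvalues (trace ≠ ±2), hence is semisimple. -/
theorem stmt11 {k : Type*} [Field k] (hchar : (2 : k) ≠ 0) (m : k) (hm : m ≠ 0)
    (hns : ∀ x : k, x ^ 2 ≠ m) :
    ∀ q : Matrix (Fin 2) (Fin 2) k, q.det = 1 → tau m q = q⁻¹ →
      q ≠ 1 → q ≠ -1 → q.trace ≠ 2 ∧ q.trace ≠ -2 :=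
  stmt11_general m hm hns
end

section
/- Let k be a field of characteristic ≠ 2 and τ = τ₁ conjugation by [[0,1],[1,0]] on SL₂(k). For any x ∈ k with x ≠ −1, set g = [[x+2, x+1],[−(x+1), −x]] ∈ SL₂(k). Then q = g τ(g)⁻¹ = [[3+2x, 2+2x],[−(2+2x), −(2x+1)]] has trace 2 but q ≠ I; hence the symmetric space of τ₁ contains non-semisimple elements. -/
open Matrix

section

variable {k : Type*} [Field k]

theorem inv_of_det_eq_one_fin_two {a b c d : k} (h : (!![a, b; c, d]).det = 1) :
    (!![a, b; c, d])⁻¹ = !![d, -b; -c, a] := by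
  rw [inv_def, h, adjugate_fin_two_of, Ring.inverse_one, one_smul]

theorem tau_one_fin_two (a b c d : k) : tau 1 !![a, b; c, d] = !![d, c; b, a] := by
  have hswap : (!![(0 : k), 1; 1, 0])⁻¹ = !![0, 1; 1, 0] :=
    inv_eq_left_inv (by simp [one_fin_two])
  rw [tau, hswap]
  simp

end

/-- For τ = τ₁ and x ≠ -1, g = [[x+2,x+1],[-(x+1),-x]] ∈ SL₂(k) and
q = g τ(g)⁻¹ = [[3+2x, 2+2x],[-(2+2x), -(2x+1)]] has trace 2 but q ≠ I;
hence the symmetric space of τ₁ contains non-semisimple elements. -/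
theorem stmt12 {k : Type*} [Field k] (hchar : (2 : k) ≠ 0) :
    ∀ x : k, x ≠ -1 →
      (!![x + 2, x + 1; -(x + 1), -x]).det = 1 ∧
      !![x + 2, x + 1; -(x + 1), -x] * (tau 1 !![x + 2, x + 1; -(x + 1), -x])⁻¹ =
        !![3 + 2 * x, 2 + 2 * x; -(2 + 2 * x), -(2 * x + 1)] ∧
      (!![3 + 2 * x, 2 + 2 * x; -(2 + 2 * x), -(2 * x + 1)]).trace = 2 ∧
      !![3 + 2 * x, 2 + 2 * x; -(2 + 2 * x), -(2 * x + 1)] ≠ 1 := by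
  intro x hx
  have hdet : (!![x + 2, x + 1; -(x + 1), -x]).det = 1 := by
    rw [det_fin_two_of]; ring
  have hdet_tau : (!![-x, -(x + 1); x + 1, x + 2]).det = 1 := by
    rw [det_fin_two_of]; ring
  refine ⟨hdet, ?_, by rw [trace_fin_two_of]; ring, ?_⟩
  · rw [tau_one_fin_two, inv_of_det_eq_one_fin_two hdet_tau, mul_fin_two]
    ext i j
    fin_cases i <;> fin_cases j <;> simp <;> ring
  · intro hq
    have h01 : 2 + 2 * x = 0 := by simpa using congrFun (congrFun hq 0) 1
    have h_factored : (2 : k) * (x + 1) = 0 := by linear_combination h01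
    rcases mul_eq_zero.mp h_factored with h2 | hx1
    · exact hchar h2
    · exact hx (eq_neg_of_add_eq_zero_left hx1)
end

section
/- Let k be a field of characteristic ≠ 2, m ∈ k*, τ = τ_m on SL₂(k). The fixed-point group H is contained in the set Q̃ U (products of an extended-symmetric-space element and an upper unitriangular matrix) if and only if −m is not a square in k*. -/
/-!
Write `g = [[a, b], [c, d]]`. For `m ≠ 0`, `τ_m g = [[d, c/m], [m b, a]]`, so `H` consists of the
matrices `[[a, b], [m b, a]]` with `a² - m b² = 1`, and a determinant-one `q` lies in `Q̃` exactly
when `q₁₀ = -m q₀₁`. Right multiplication by `[[1, -u], [0, 1]]` only changes the second column,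
so `g ∈ H` lies in `Q̃ U` iff `2 m b = m u a` is solvable in `u`, i.e. (as `2 ≠ 0`, and `a = 0`
forces `b ≠ 0`) iff `a ≠ 0`. An element of `H` with `a = 0` is a solution of `-m b² = 1`,
i.e. `-m = (1/b)²`.
-/

open Matrix

section

variable {k : Type*} [Field k] {m : k}

lemma inv_antidiagonal_fin_two (hm : m ≠ 0) :
    (!![0, 1; m, 0] : Matrix (Fin 2) (Fin 2) k)⁻¹ = !![0, m⁻¹; 1, 0] := by
  apply Matrix.inv_eq_right_inv
  ext i j
  fin_cases i <;> fin_cases j <;> simp [hm]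

lemma tau_eq (hm : m ≠ 0) (g : Matrix (Fin 2) (Fin 2) k) :
    tau m g = !![g 1 1, g 1 0 * m⁻¹; m * g 0 1, g 0 0] := by
  rw [tau, inv_antidiagonal_fin_two hm, eta_fin_two g]
  ext i j
  fin_cases i <;> fin_cases j <;> simp [mul_comm m, hm]

lemma tau_eq_self_iff (hm : m ≠ 0) (g : Matrix (Fin 2) (Fin 2) k) :
    tau m g = g ↔ g 1 1 = g 0 0 ∧ g 1 0 = m * g 0 1 := by
  rw [tau_eq hm, ← Matrix.ext_iff]
  simp only [Fin.forall_fin_two, of_apply, cons_val', cons_val_zero, cons_val_one, empty_val',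
    cons_val_fin_one]
  constructor
  · rintro ⟨⟨h11, -⟩, h10, -⟩
    exact ⟨h11, h10.symm⟩
  · rintro ⟨h11, h10⟩
    refine ⟨⟨h11, ?_⟩, h10.symm, h11.symm⟩
    rw [h10]
    field_simp

lemma tau_eq_inv_iff {q : Matrix (Fin 2) (Fin 2) k} (hm : m ≠ 0) (hq : q.det = 1) :
    tau m q = q⁻¹ ↔ q 1 0 = -(m * q 0 1) := by
  rw [tau_eq hm, inv_def, hq, Ring.inverse_one, one_smul, adjugate_fin_two, ← Matrix.ext_iff]
  simp only [Fin.forall_fin_two, of_apply, cons_val', cons_val_zero, cons_val_one, empty_val',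
    cons_val_fin_one, true_and, and_true]
  constructor
  · rintro ⟨-, h⟩
    exact neg_eq_iff_eq_neg.mp h.symm
  · intro h
    refine ⟨?_, by rw [h, neg_neg]⟩
    rw [h]; field_simp

lemma exists_tau_eq_inv_mul_unipotent_iff (hm : m ≠ 0) {x : Matrix (Fin 2) (Fin 2) k}
    (hx : x.det = 1) :
    (∃ q : Matrix (Fin 2) (Fin 2) k, ∃ u : k,
        (q.det = 1 ∧ tau m q = q⁻¹) ∧ x = q * !![1, u; 0, 1]) ↔
      ∃ u : k, x 1 0 + m * x 0 1 = m * u * x 0 0 := by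
  constructor
  · rintro ⟨q, u, ⟨hq, hτ⟩, rfl⟩
    rw [tau_eq_inv_iff hm hq] at hτ
    refine ⟨u, ?_⟩
    simp only [mul_apply, of_apply, cons_val', cons_val_zero, cons_val_one, cons_val_fin_one,
      Fin.sum_univ_two, mul_one, mul_zero, add_zero]
    linear_combination hτ
  · rintro ⟨u, hu⟩
    have hdet : (x * !![1, -u; 0, 1]).det = 1 := by simp [hx]
    refine ⟨x * !![1, -u; 0, 1], u, ⟨hdet, ?_⟩, ?_⟩
    · rw [tau_eq_inv_iff hm hdet]
      simp only [mul_apply, of_apply, cons_val', cons_val_zero, cons_val_one, cons_val_fin_one,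
        Fin.sum_univ_two, mul_one, mul_zero, add_zero, mul_neg]
      linear_combination hu
    · rw [mul_assoc, mul_fin_two]
      simp [← one_fin_two]

lemma exists_tau_eq_inv_mul_unipotent_iff_of_tau_eq_self (hchar : (2 : k) ≠ 0) (hm : m ≠ 0)
    {g : Matrix (Fin 2) (Fin 2) k} (hdet : g.det = 1) (hτ : tau m g = g) :
    (∃ q : Matrix (Fin 2) (Fin 2) k, ∃ u : k,
        (q.det = 1 ∧ tau m q = q⁻¹) ∧ g = q * !![1, u; 0, 1]) ↔ g 0 0 ≠ 0 := by
  rw [exists_tau_eq_inv_mul_unipotent_iff hm hdet]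
  obtain ⟨h11, h10⟩ := (tau_eq_self_iff hm g).mp hτ
  rw [det_fin_two, h11, h10] at hdet
  constructor
  · rintro ⟨u, hu⟩ h00
    have h2m01 : 2 * m * g 0 1 = 0 := by linear_combination hu - h10 + m * u * h00
    have h01 : g 0 1 = 0 := by simpa [hchar, hm] using h2m01
    simp [h00, h01] at hdet
  · intro h00
    refine ⟨2 * g 0 1 / g 0 0, ?_⟩
    field_simp
    rw [h10]
    ring

lemma exists_tau_eq_self_zero_corner_iff (hm : m ≠ 0) :
    (∃ g : Matrix (Fin 2) (Fin 2) k, g.det = 1 ∧ tau m g = g ∧ g 0 0 = 0) ↔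
      ∃ x : k, x ^ 2 = -m := by
  constructor
  · rintro ⟨g, hdet, hτ, h00⟩
    obtain ⟨h11, h10⟩ := (tau_eq_self_iff hm g).mp hτ
    rw [det_fin_two, h11, h10, h00] at hdet
    have h01 : g 0 1 ≠ 0 := by rintro h; simp [h] at hdet
    refine ⟨(g 0 1)⁻¹, ?_⟩
    field_simp
    linear_combination -hdet
  · rintro ⟨x, hx⟩
    have hx0 : x ≠ 0 := by rintro rfl; simp [eq_comm, hm] at hx
    refine ⟨!![0, x⁻¹; m * x⁻¹, 0], ?_, (tau_eq_self_iff hm _).mpr ⟨rfl, rfl⟩, rfl⟩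
    rw [det_fin_two_of]
    field_simp
    linear_combination -hx

end

/-- H ⊆ Q̃ U if and only if -m is not a square in k*. -/
theorem stmt16 {k : Type*} [Field k] (hchar : (2 : k) ≠ 0) (m : k) (hm : m ≠ 0) :
    ({g : Matrix (Fin 2) (Fin 2) k | g.det = 1 ∧ tau m g = g} ⊆
        {x : Matrix (Fin 2) (Fin 2) k | ∃ q : Matrix (Fin 2) (Fin 2) k, ∃ u : k,
          (q.det = 1 ∧ tau m q = q⁻¹) ∧ x = q * !![1, u; 0, 1]}) ↔
      ¬ ∃ x : k, x ^ 2 = -m := by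
  rw [← exists_tau_eq_self_zero_corner_iff hm]
  constructor
  · rintro hsub ⟨g, hdet, hτ, h00⟩
    exact (exists_tau_eq_inv_mul_unipotent_iff_of_tau_eq_self hchar hm hdet hτ).mp
      (hsub ⟨hdet, hτ⟩) h00
  · rintro hno g ⟨hdet, hτ⟩
    exact (exists_tau_eq_inv_mul_unipotent_iff_of_tau_eq_self hchar hm hdet hτ).mpr
      fun h00 ↦ hno ⟨g, hdet, hτ, h00⟩
end
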